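/- A DAG G is lca-relevant if and only if it has the strong cluster-lca property, i.e., LCA_G(C_G(v)) = {v} for every vertex v. -/
import Mathlib


/-- A vertex is a leaf if it has no outgoing edge. -/
def IsLeaf {V : Type*} (E : V → V → Prop) (v : V) : Prop := ∀ u, ¬ E v u

/-- The cluster of `v`: the set of leaves reachable from `v` (descendant leaves). -/
def cluster {V : Type*} (E : V → V → Prop) (v : V) : Set V :=
  {x | IsLeaf E x ∧ Relation.ReflTransGen E v x}

/-- `v` is a least common ancestor of `A`: it is a common ancestor
(`A ⊆ cluster E v`) and no strict descendant of `v` is a common ancestor. -/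
def IsLCA {V : Type*} (E : V → V → Prop) (A : Set V) (v : V) : Prop :=
  A ⊆ cluster E v ∧ ∀ w, Relation.TransGen E v w → ¬ A ⊆ cluster E w

/-- Acyclicity of a directed graph. -/
def Acyclic {V : Type*} (E : V → V → Prop) : Prop := ∀ v, ¬ Relation.TransGen E v v

lemma cluster_mono {V : Type*} (E : V → V → Prop) {u w : V}
    (h : Relation.ReflTransGen E u w) : cluster E w ⊆ cluster E u :=
  fun _ hx => ⟨hx.1, h.trans hx.2⟩

lemma exists_lca {V : Type*} [Fintype V] (E : V → V → Prop) (hacyc : Acyclic E)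
    (A : Set V) : ∀ u, A ⊆ cluster E u →
      ∃ w, Relation.ReflTransGen E u w ∧ IsLCA E A w := by
  have hwf : WellFounded (fun a b => Relation.TransGen E b a) := by
    have h1 : IsTrans V (fun a b => Relation.TransGen E b a) :=
      ⟨fun _ _ _ h1 h2 => h2.trans h1⟩
    have h2 : IsIrrefl V (fun a b => Relation.TransGen E b a) := ⟨hacyc⟩
    exact Finite.wellFounded_of_trans_of_irrefl _
  intro u
  induction u using hwf.induction with
  | _ u ih =>
    intro hA
    by_cases h : ∀ w, Relation.TransGen E u w → ¬ A ⊆ cluster E w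
    · exact ⟨u, .refl, hA, h⟩
    · push_neg at h
      obtain ⟨w, hw, hAw⟩ := h
      obtain ⟨z, hz, hzl⟩ := ih w hw hAw
      exact ⟨z, hw.to_reflTransGen.trans hz, hzl⟩

/-- A DAG is lca-relevant iff it has the strong cluster-lca property:
`LCA(C(v)) = {v}` for every vertex `v`. -/
theorem lcarel_iff_strongCL {V : Type*} [Fintype V] (E : V → V → Prop)
    (hacyc : Acyclic E) :
    (∀ v : V, ∃ A : Set V, A ⊆ {x | IsLeaf E x} ∧ {w | IsLCA E A w} = {v}) ↔
      ∀ v : V, {w | IsLCA E (cluster E v) w} = {v} := by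
  constructor
  · intro h v
    obtain ⟨A, _, hAv⟩ := h v
    have hv : IsLCA E A v := by
      have : v ∈ {w | IsLCA E A w} := by rw [hAv]; rfl
      exact this
    ext u
    simp only [Set.mem_setOf_eq, Set.mem_singleton_iff]
    constructor
    · intro hu
      -- A ⊆ cluster v ⊆ cluster u
      have hAu : A ⊆ cluster E u := fun x hx => hu.1 (hv.1 hx)
      obtain ⟨w, hw, hwl⟩ := exists_lca E hacyc A u hAu
      have hwv : w = v := by
        have : w ∈ {w | IsLCA E A w} := hwl
        rwa [hAv] at this
      rw [hwv] at hw
      rcases (Relation.reflTransGen_iff_eq_or_transGen.mp hw) with h' | h'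
      · exact h'.symm
      · exact absurd (le_refl (cluster E v) : cluster E v ⊆ cluster E v)
          (hu.2 v h')
    · intro hu
      subst hu
      refine ⟨le_refl _, fun w hw hsub => ?_⟩
      exact hv.2 w hw (fun x hx => hsub (hv.1 hx))
  · intro h v
    exact ⟨cluster E v, fun x hx => hx.1, h v⟩
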